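/- arXiv:1107.3538 — 2 statements merged into one kernel-verified Lean document; each statement's English description precedes it below -/
import Mathlib

section
/- Let f = (1/√2)(1_{[0,1]} ⊗ 1_{[1,2]} + 1_{[1,2]} ⊗ 1_{[0,1]}) ∈ L²(ℝ₊²). Then (f ⌢_1 f) ⌢_1 f = (1/2) f and ⟨f ⌢_1 f, f⟩_{L²(ℝ₊²)} = 0. -/
open MeasureTheory

noncomputable section

/-- Lebesgue measure restricted to `ℝ₊`. -/
def ν : Measure ℝ := volume.restrict (Set.Ici (0 : ℝ))

/-- The first contraction of two kernels on `ℝ₊²`: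
`(f ⌢₁ g)(s,t) = ∫_{ℝ₊} f(s,x) g(x,t) dx`. -/
def c1 (f g : ℝ → ℝ → ℝ) : ℝ → ℝ → ℝ := fun s t => ∫ x, f s x * g x t ∂ν

/-- The kernel `f = (1/√2)(1_{[0,1]} ⊗ 1_{[1,2]} + 1_{[1,2]} ⊗ 1_{[0,1]})`. -/
def tetiKer : ℝ → ℝ → ℝ := fun s t =>
  (Real.sqrt 2)⁻¹ *
    (Set.indicator (Set.Icc (0:ℝ) 1) (fun _ => (1:ℝ)) s *
       Set.indicator (Set.Icc (1:ℝ) 2) (fun _ => (1:ℝ)) t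
     + Set.indicator (Set.Icc (1:ℝ) 2) (fun _ => (1:ℝ)) s *
       Set.indicator (Set.Icc (0:ℝ) 1) (fun _ => (1:ℝ)) t)

/-! `e₁ = 1_{[0,1]}` and `e₂ = 1_{[1,2]}` are orthonormal in `L²(ℝ₊)` with `e₁ e₂ = 0` a.e.
For `f = c (e₁ ⊗ e₂ + e₂ ⊗ e₁)` every slice `f(s, ·)` lies in the span of `e₁, e₂`, so a
contraction is the inner product of coefficient vectors: `f ⌢₁ f = c² (e₁ ⊗ e₁ + e₂ ⊗ e₂)` and
`(f ⌢₁ f) ⌢₁ f = c² f`.  Every term of the pointwise product `(f ⌢₁ f) f` carries a factor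
`e₁(s) e₂(s)` or `e₁(t) e₂(t)`, so it vanishes a.e. -/

instance : SFinite ν := inferInstanceAs (SFinite (volume.restrict _))

instance : NullSingletonClass ν := inferInstanceAs (NullSingletonClass (volume.restrict _))

def symmTensor (c : ℝ) (u v : ℝ → ℝ) : ℝ → ℝ → ℝ := fun s t => c * (u s * v t + v s * u t)

section Orthonormal

variable {μ : Measure ℝ} {e₁ e₂ : ℝ → ℝ}

theorem integral_lincomb_mul_lincomb (he : ∀ᵐ x ∂μ, e₁ x * e₂ x = 0)
    (h₁ : ∫ x, e₁ x ^ 2 ∂μ = 1) (h₂ : ∫ x, e₂ x ^ 2 ∂μ = 1) (a b c d : ℝ) :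
    ∫ x, (a * e₁ x + b * e₂ x) * (c * e₁ x + d * e₂ x) ∂μ = a * c + b * d := by
  have hi₁ : Integrable (fun x => e₁ x ^ 2) μ := .of_integral_ne_zero (by rw [h₁]; norm_num)
  have hi₂ : Integrable (fun x => e₂ x ^ 2) μ := .of_integral_ne_zero (by rw [h₂]; norm_num)
  calc ∫ x, (a * e₁ x + b * e₂ x) * (c * e₁ x + d * e₂ x) ∂μ
      = ∫ x, (a * c) * e₁ x ^ 2 + (b * d) * e₂ x ^ 2 ∂μ := by
        refine integral_congr_ae ?_
        filter_upwards [he] with x hx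
        linear_combination (a * d + b * c) * hx
    _ = a * c + b * d := by
        rw [integral_add (hi₁.const_mul _) (hi₂.const_mul _), integral_const_mul,
          integral_const_mul, h₁, h₂, mul_one, mul_one]

theorem ae_prod_mul_symmTensor_eq_zero [SFinite μ] (he : ∀ᵐ x ∂μ, e₁ x * e₂ x = 0) (c : ℝ) :
    ∀ᵐ p ∂μ.prod μ, (e₁ p.1 * e₁ p.2 + e₂ p.1 * e₂ p.2) * symmTensor c e₁ e₂ p.1 p.2 = 0 := by
  filter_upwards [Measure.quasiMeasurePreserving_fst.ae he,
    Measure.quasiMeasurePreserving_snd.ae he] with p hs ht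
  simp only [symmTensor]
  linear_combination c * ((e₁ p.2 ^ 2 + e₂ p.2 ^ 2) * hs + (e₁ p.1 ^ 2 + e₂ p.1 ^ 2) * ht)

end Orthonormal

section Contraction

variable {e₁ e₂ : ℝ → ℝ} (he : ∀ᵐ x ∂ν, e₁ x * e₂ x = 0)
  (h₁ : ∫ x, e₁ x ^ 2 ∂ν = 1) (h₂ : ∫ x, e₂ x ^ 2 ∂ν = 1) (c : ℝ)
include he h₁ h₂

theorem c1_symmTensor_self (s t : ℝ) :
    c1 (symmTensor c e₁ e₂) (symmTensor c e₁ e₂) s t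
      = c ^ 2 * (e₁ s * e₁ t + e₂ s * e₂ t) := by
  calc c1 (symmTensor c e₁ e₂) (symmTensor c e₁ e₂) s t
      = ∫ x, (c * e₂ s * e₁ x + c * e₁ s * e₂ x) * (c * e₂ t * e₁ x + c * e₁ t * e₂ x) ∂ν := by
        refine integral_congr_ae (.of_forall fun x => ?_)
        simp only [symmTensor]; ring
    _ = c ^ 2 * (e₁ s * e₁ t + e₂ s * e₂ t) := by
        rw [integral_lincomb_mul_lincomb he h₁ h₂]; ring

theorem c1_c1_symmTensor (s t : ℝ) :
    c1 (c1 (symmTensor c e₁ e₂) (symmTensor c e₁ e₂)) (symmTensor c e₁ e₂) s t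
      = c ^ 2 * symmTensor c e₁ e₂ s t := by
  calc c1 (c1 (symmTensor c e₁ e₂) (symmTensor c e₁ e₂)) (symmTensor c e₁ e₂) s t
      = ∫ x, (c ^ 2 * e₁ s * e₁ x + c ^ 2 * e₂ s * e₂ x)
          * (c * e₂ t * e₁ x + c * e₁ t * e₂ x) ∂ν := by
        refine integral_congr_ae (.of_forall fun x => ?_)
        simp only [c1_symmTensor_self he h₁ h₂, symmTensor]; ring
    _ = c ^ 2 * symmTensor c e₁ e₂ s t := by
        rw [integral_lincomb_mul_lincomb he h₁ h₂, symmTensor]; ring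

end Contraction

theorem ae_indicator_Icc_mul_indicator_Icc_eq_zero (μ : Measure ℝ) [NullSingletonClass μ]
    (a b c : ℝ) :
    ∀ᵐ x ∂μ, (Set.Icc a b).indicator 1 x * (Set.Icc b c).indicator (1 : ℝ → ℝ) x = 0 := by
  filter_upwards [μ.ae_ne b] with x hx
  by_cases hab : x ∈ Set.Icc a b
  · have hbc : x ∉ Set.Icc b c := fun h => hx (le_antisymm hab.2 h.1)
    simp [hbc]
  · simp [hab]

theorem integral_indicator_Icc_sq {a b : ℝ} (ha : 0 ≤ a) (hab : a ≤ b) :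
    ∫ x, (Set.Icc a b).indicator (1 : ℝ → ℝ) x ^ 2 ∂ν = b - a := by
  have hsq : (fun x => (Set.Icc a b).indicator (1 : ℝ → ℝ) x ^ 2) = (Set.Icc a b).indicator 1 := by
    funext x; by_cases hx : x ∈ Set.Icc a b <;> simp [hx]
  rw [hsq, integral_indicator_one measurableSet_Icc, ν, measureReal_restrict_apply measurableSet_Icc,
    Set.inter_eq_left.2 ((Set.Icc_subset_Ici_iff hab).2 ha), Real.volume_real_Icc_of_le hab]

/-- For `f = (1/√2)(1_{[0,1]} ⊗ 1_{[1,2]} + 1_{[1,2]} ⊗ 1_{[0,1]})`, one has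
`(f ⌢₁ f) ⌢₁ f = (1/2) f` in `L²(ℝ₊²)` and `⟨f ⌢₁ f, f⟩ = 0`. -/
theorem stmt4 :
    (∀ᵐ p ∂ ν.prod ν, c1 (c1 tetiKer tetiKer) tetiKer p.1 p.2 = (1/2) * tetiKer p.1 p.2)
    ∧ (∫ p, c1 tetiKer tetiKer p.1 p.2 * tetiKer p.1 p.2 ∂ ν.prod ν) = 0 := by
  have hf : tetiKer = symmTensor (Real.sqrt 2)⁻¹ ((Set.Icc 0 1).indicator 1)
      ((Set.Icc 1 2).indicator 1) := rfl
  have he := ae_indicator_Icc_mul_indicator_Icc_eq_zero ν 0 1 2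
  have h₁ : ∫ x, (Set.Icc 0 1).indicator (1 : ℝ → ℝ) x ^ 2 ∂ν = 1 := by
    norm_num [integral_indicator_Icc_sq]
  have h₂ : ∫ x, (Set.Icc 1 2).indicator (1 : ℝ → ℝ) x ^ 2 ∂ν = 1 := by
    norm_num [integral_indicator_Icc_sq]
  have hc : (Real.sqrt 2)⁻¹ ^ 2 = 1 / 2 := by rw [inv_pow, Real.sq_sqrt zero_le_two]; norm_num
  rw [hf]
  constructor
  · exact .of_forall fun p => by rw [c1_c1_symmTensor he h₁ h₂, hc]
  · refine integral_eq_zero_of_ae ?_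
    filter_upwards [ae_prod_mul_symmTensor_eq_zero he _] with p hp
    rw [Pi.zero_apply, c1_symmTensor_self he h₁ h₂, mul_assoc, hp, mul_zero]

end
end

section
/- Define sequences by the recursion S⁺₂ = 1, N⁺₃ = 1/2, and for m ≥ 2: S⁺_{2m} = N⁺_{2m−1} + Σ_{k=1}^{m−1} S⁺_{2k} S⁺_{2m−2k}, N⁺_{2m−1} = (1/2) S⁺_{2m−2} + Σ_{k=1}^{m−2} S⁺_{2k} N⁺_{2m−2k−1}; and S₂ = 1, N₃ = 1/2, S_{2m} = S_{2m−2} + N_{2m−1} + Σ_{k=1}^{m−1} S⁺_{2k} S_{2m−2k}, N_{2m−1} = (1/2) S_{2m−2} + Σ_{k=1}^{m−2} S⁺_{2k} N_{2m−2k−1}. Then S_{2m} = m_{2m}(𝒯) = (1/(2ᵐ m)) Σ_{k=1}^m 2^k · C(2m, k−1) · C(m, k) for every m ≥ 1. -/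
/-!
Write `U, F, K, G` for the generating functions `∑ S_{2m} xᵐ`, `∑ S⁺_{2m} xᵐ`, `∑ N_{2m-1} xᵐ`,
`∑ N⁺_{2m-1} xᵐ`. The recursions say `F = x + G + F²`, `G = xF/2 + FG`, `U = x + xU + K + FU` and
`K = xU/2 + FK`. Eliminating `G` and `K` gives `(1 - F)(1 + U) = 1`, and then
`U = x φ(U)` with `φ(u) = (1 + u/2)(1 + u)²`. Lagrange inversion, `m [xᵐ] U = [u^{m-1}] φ(u)ᵐ`,
expands into the stated binomial sum.
-/

open Finset PowerSeries
open scoped Polynomial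

section LagrangeInversion

variable {K : Type*} [CommSemiring K]

theorem PowerSeries.coeff_aeval_eq_sum_range {U : K⟦X⟧} (hU : constantCoeff U = 0)
    (p : K[X]) (d : ℕ) :
    coeff d (Polynomial.aeval U p) = ∑ i ∈ range (d + 1), p.coeff i * coeff d (U ^ i) := by
  have hdeg : p.natDegree < max (p.natDegree + 1) (d + 1) := by omega
  rw [Polynomial.aeval_eq_sum_range' hdeg, map_sum]
  simp only [map_smul, smul_eq_mul]
  refine (sum_subset (range_subset_range.mpr (le_max_right _ _)) fun i _ hi => ?_).symm
  have hXU : (X : K⟦X⟧) ^ i ∣ U ^ i := pow_dvd_pow_of_dvd (X_dvd_iff.mpr hU) i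
  rw [X_pow_dvd_iff.mp hXU d (by simpa using hi), mul_zero]

theorem Polynomial.natCast_add_mul_derivative_pow_mul_pow (p : K[X]) (a b : ℕ) :
    ((a + b : ℕ) : K[X]) * (derivative (p ^ a) * p ^ b) = a * derivative (p ^ (a + b)) := by
  rcases a with _ | a
  · simp
  rw [derivative_pow, derivative_pow, ← C_eq_natCast, ← C_eq_natCast,
    show a + 1 + b - 1 = a + b by omega, Nat.add_sub_cancel, pow_add]
  ring

theorem Polynomial.coeff_derivative_mul (p q : K[X]) (e : ℕ) :
    (derivative p * q).coeff e = ∑ i ∈ range (e + 2), p.coeff i * (i * q.coeff (e + 1 - i)) := by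
  rw [coeff_mul, Nat.sum_antidiagonal_eq_sum_range_succ_mk,
    sum_range_succ' (fun i => p.coeff i * (i * q.coeff (e + 1 - i))), Nat.cast_zero, zero_mul,
    mul_zero, add_zero]
  refine sum_congr rfl fun a _ => ?_
  rw [coeff_derivative, Nat.add_sub_add_right]
  push_cast
  ring

variable [IsDomain K] [CharZero K]

theorem PowerSeries.lagrange_inversion {φ : K[X]} {U : K⟦X⟧} (hU : U = X * Polynomial.aeval U φ)
    (m : ℕ) : ∀ j ≤ m, (m : K) * coeff m (U ^ j) = j * (φ ^ m).coeff (m - j) := by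
  induction m using Nat.strong_induction_on with
  | _ m ih =>
  intro j hj
  obtain ⟨d, rfl⟩ : ∃ d, m = d + j := ⟨m - j, by omega⟩
  rcases Nat.eq_zero_or_pos j with rfl | hj0
  · simp [coeff_one]
  have hU0 : constantCoeff U = 0 := X_dvd_iff.mp ⟨_, hU⟩
  have hUj : coeff (d + j) (U ^ j) = ∑ i ∈ range (d + 1), (φ ^ j).coeff i * coeff d (U ^ i) := by
    conv_lhs => rw [hU, mul_pow, ← map_pow, coeff_X_pow_mul', if_pos (by omega),
      Nat.add_sub_cancel, coeff_aeval_eq_sum_range hU0]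
  rw [Nat.add_sub_cancel]
  rcases d with _ | e
  · rw [hUj]; simp
  -- `(d + j) (φʲ)' φᵈ = j (φ^{d+j})'` collapses the convolution given by the induction hypothesis.
  refine mul_left_cancel₀ (Nat.cast_ne_zero.mpr e.succ_ne_zero : ((e + 1 : ℕ) : K) ≠ 0) ?_
  set d := e + 1 with hd
  calc (d : K) * ((d + j : ℕ) * coeff (d + j) (U ^ j))
      = (d + j : ℕ) * ∑ i ∈ range (d + 1), (φ ^ j).coeff i * (d * coeff d (U ^ i)) := by
        rw [hUj, mul_sum, mul_sum, mul_sum]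
        refine sum_congr rfl fun i _ => ?_
        ring
    _ = (d + j : ℕ) * ∑ i ∈ range (d + 1), (φ ^ j).coeff i * (i * (φ ^ d).coeff (d - i)) := by
        congr 1
        refine sum_congr rfl fun i hi => ?_
        rw [ih d (by omega) i (by simpa [Nat.lt_succ_iff] using hi)]
    _ = ((d + j : ℕ) * (Polynomial.derivative (φ ^ j) * φ ^ d)).coeff e := by
        rw [Polynomial.coeff_natCast_mul, Polynomial.coeff_derivative_mul]
    _ = (j * Polynomial.derivative (φ ^ (j + d))).coeff e := by
        rw [add_comm d j, Polynomial.natCast_add_mul_derivative_pow_mul_pow]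
    _ = d * (j * (φ ^ (d + j)).coeff d) := by
        rw [Polynomial.coeff_natCast_mul, Polynomial.coeff_derivative, add_comm j d, hd]
        push_cast; ring

end LagrangeInversion

section TailSeries

variable {R : Type*} [CommSemiring R]

-- The recursions leave `S 0`, `N 1`, … unconstrained, so the series drop the terms below `n₀`.
def tailSeries (n₀ : ℕ) (a : ℕ → R) : R⟦X⟧ :=
  mk fun m => if n₀ ≤ m then a m else 0

@[simp]
theorem coeff_tailSeries (n₀ m : ℕ) (a : ℕ → R) :
    coeff m (tailSeries n₀ a) = if n₀ ≤ m then a m else 0 :=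
  coeff_mk _ _

@[simp]
theorem constantCoeff_tailSeries {n₀ : ℕ} (h : 1 ≤ n₀) (a : ℕ → R) :
    constantCoeff (tailSeries n₀ a) = 0 := by
  rw [← coeff_zero_eq_constantCoeff_apply, coeff_tailSeries, if_neg (by omega)]

theorem PowerSeries.coeff_mul_eq_sum_Icc {A B : R⟦X⟧} (hA : constantCoeff A = 0)
    (hB : constantCoeff B = 0) (n : ℕ) :
    coeff n (A * B) = ∑ k ∈ Icc 1 (n - 1), coeff k A * coeff (n - k) B := by
  rw [coeff_mul, Nat.sum_antidiagonal_eq_sum_range_succ_mk]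
  refine (sum_subset (fun k hk => by rw [mem_Icc] at hk; rw [mem_range]; omega)
    fun k hk hk' => ?_).symm
  simp only [mem_range, mem_Icc, not_and_or, not_le] at hk hk'
  rcases hk' with hk0 | hkn
  · rw [show k = 0 by omega, coeff_zero_eq_constantCoeff_apply, hA, zero_mul]
  · rw [show n - k = 0 by omega, coeff_zero_eq_constantCoeff_apply, hB, mul_zero]

theorem coeff_tailSeries_one_mul {B : R⟦X⟧} (hB : constantCoeff B = 0) (a : ℕ → R) (n : ℕ) :
    coeff n (tailSeries 1 a * B) = ∑ k ∈ Icc 1 (n - 1), a k * coeff (n - k) B := by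
  rw [coeff_mul_eq_sum_Icc (constantCoeff_tailSeries le_rfl a) hB]
  refine sum_congr rfl fun k hk => ?_
  rw [coeff_tailSeries, if_pos (mem_Icc.mp hk).1]

theorem tailSeries_one_eq_of_rec {a c d : ℕ → R} {r : R} (h1 : c 1 = 1)
    (h : ∀ m, 2 ≤ m → c m = r * c (m - 1) + d m + ∑ k ∈ Icc 1 (m - 1), a k * c (m - k)) :
    tailSeries 1 c =
      X + C r * (X * tailSeries 1 c) + tailSeries 2 d + tailSeries 1 a * tailSeries 1 c := by
  ext (_ | _ | m)
  · simp
  · simp [coeff_tailSeries_one_mul, h1, coeff_X]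
  · rw [coeff_tailSeries, if_pos (by omega), h (m + 2) (by omega), map_add, map_add, map_add,
      coeff_X, if_neg (by omega), coeff_C_mul, coeff_succ_X_mul, coeff_tailSeries,
      if_pos (by omega), coeff_tailSeries, if_pos (by omega), coeff_tailSeries_one_mul (constantCoeff_tailSeries le_rfl c), zero_add, Nat.add_sub_cancel]
    refine congrArg _ (sum_congr rfl fun k hk => ?_)
    rw [coeff_tailSeries, if_pos (by rw [mem_Icc] at hk; omega)]

theorem tailSeries_two_eq_of_rec {a b c : ℕ → R} {r : R}
    (h : ∀ m, 2 ≤ m → c m = r * b (m - 1) + ∑ k ∈ Icc 1 (m - 2), a k * c (m - k)) :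
    tailSeries 2 c = C r * (X * tailSeries 1 b) + tailSeries 1 a * tailSeries 2 c := by
  ext (_ | _ | m)
  · simp
  · simp [coeff_tailSeries_one_mul]
  · rw [coeff_tailSeries, if_pos (by omega), h (m + 2) (by omega), map_add, coeff_C_mul,
      coeff_succ_X_mul, coeff_tailSeries, if_pos (by omega),
      coeff_tailSeries_one_mul (constantCoeff_tailSeries (by norm_num) c), Nat.add_one_sub_one,
      sum_Icc_succ_top (by omega), coeff_tailSeries, if_neg (by omega), mul_zero, add_zero,
      Nat.add_sub_cancel]
    refine congrArg _ (sum_congr rfl fun k hk => ?_)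
    rw [coeff_tailSeries, if_pos (by rw [mem_Icc] at hk; omega)]

end TailSeries

noncomputable def tetillaPoly : ℝ[X] :=
  Polynomial.C (1 / 2) * ((Polynomial.X + Polynomial.C 2) * (Polynomial.X + 1) ^ 2)

theorem aeval_tetillaPoly (U : ℝ⟦X⟧) :
    Polynomial.aeval U tetillaPoly = C (1 / 2) * ((U + C 2) * (U + 1) ^ 2) := by
  simp [tetillaPoly]

theorem tetillaPoly_pow_coeff_pred {m : ℕ} (hm : 1 ≤ m) :
    (tetillaPoly ^ m).coeff (m - 1) =
      (1 / 2) ^ m * ∑ k ∈ Icc 1 m, (2 : ℝ) ^ k * (2 * m).choose (k - 1) * m.choose k := by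
  rw [tetillaPoly, mul_pow, mul_pow, ← pow_mul, ← Polynomial.C_pow, Polynomial.coeff_C_mul,
    Polynomial.coeff_mul]
  simp only [Polynomial.coeff_X_add_C_pow, Polynomial.coeff_X_add_one_pow]
  congr 1
  refine sum_nbij' (fun ab => ab.2 + 1) (fun k => (m - k, k - 1)) ?_ ?_ ?_ ?_ ?_
  · simp only [Finset.HasAntidiagonal.mem_antidiagonal, mem_Icc, Prod.forall]; omega
  · simp only [Finset.HasAntidiagonal.mem_antidiagonal, mem_Icc]; omega
  · simp only [Finset.HasAntidiagonal.mem_antidiagonal, Prod.forall, Prod.mk.injEq]; omega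
  · simp only [mem_Icc]; omega
  · simp only [Finset.HasAntidiagonal.mem_antidiagonal, Prod.forall]
    intro a b hab
    have hma : m - a = b + 1 := by omega
    rw [hma, Nat.add_sub_cancel, ← hma, Nat.choose_symm (by omega)]
    ring

theorem eq_X_mul_aeval_tetillaPoly {U F G K : ℝ⟦X⟧} (hF0 : constantCoeff F = 0)
    (hF : F = X + G + F ^ 2) (hG : G = C (1 / 2) * (X * F) + F * G)
    (hU : U = X + X * U + K + F * U) (hK : K = C (1 / 2) * (X * U) + F * K) :
    U = X * Polynomial.aeval U tetillaPoly := by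
  rw [aeval_tetillaPoly]
  have hFD : F * (1 - F) ^ 2 = X * (1 - F) + C (1 / 2) * (X * F) := by
    linear_combination (1 - F) * hF + hG
  have hUD : U * (1 - F) ^ 2 = X * (1 - F) * (1 + U) + C (1 / 2) * (X * U) := by
    linear_combination (1 - F) * hU + hK
  have hQ : (1 - F) ^ 2 - X * (1 - F) - C (1 / 2) * X ≠ 0 := fun h => by
    simpa [hF0] using congrArg constantCoeff h
  have hinv : (1 - F) * (1 + U) = 1 := by
    have : ((1 - F) * (1 + U) - 1) * ((1 - F) ^ 2 - X * (1 - F) - C (1 / 2) * X) = 0 := by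
      linear_combination (1 - F) * hUD - hFD
    exact sub_eq_zero.mp ((mul_eq_zero.mp this).resolve_right hQ)
  have hFU : F * (1 + U) = U := by linear_combination -hinv
  have hC : C (1 / 2 : ℝ) * C 2 = 1 := by rw [← map_mul]; norm_num
  calc U = F * (1 + U) * ((1 - F) * (1 + U)) ^ 2 := by rw [hFU, hinv]; ring
    _ = F * (1 - F) ^ 2 * (1 + U) ^ 3 := by ring
    _ = X * (1 + U) ^ 2 * ((1 - F) * (1 + U) + C (1 / 2) * (F * (1 + U))) := by rw [hFD]; ring
    _ = X * (C (1 / 2) * ((U + C 2) * (U + 1) ^ 2)) := by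
      rw [hinv, hFU]; linear_combination -(X * (1 + U) ^ 2) * hC

theorem stmt18_general (S Sp N Np : ℕ → ℝ)
    (hSp2 : Sp 2 = 1) (hS2 : S 2 = 1)
    (hSp : ∀ m : ℕ, 2 ≤ m →
      Sp (2*m) = Np (2*m-1) + ∑ k ∈ Finset.Icc 1 (m-1), Sp (2*k) * Sp (2*m-2*k))
    (hNp : ∀ m : ℕ, 2 ≤ m →
      Np (2*m-1) = (1/2) * Sp (2*m-2) + ∑ k ∈ Finset.Icc 1 (m-2), Sp (2*k) * Np (2*m-2*k-1))
    (hS : ∀ m : ℕ, 2 ≤ m →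
      S (2*m) = S (2*m-2) + N (2*m-1) + ∑ k ∈ Finset.Icc 1 (m-1), Sp (2*k) * S (2*m-2*k))
    (hN : ∀ m : ℕ, 2 ≤ m →
      N (2*m-1) = (1/2) * S (2*m-2) + ∑ k ∈ Finset.Icc 1 (m-2), Sp (2*k) * N (2*m-2*k-1)) :
    ∀ m : ℕ, 1 ≤ m →
      S (2*m) = (1 / (2 ^ m * (m : ℝ))) *
        ∑ k ∈ Finset.Icc 1 m,
          (2 : ℝ) ^ k * (Nat.choose (2*m) (k-1)) * (Nat.choose m k) := by
  intro m hm
  set U := tailSeries 1 fun m => S (2 * m)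
  set F := tailSeries 1 fun m => Sp (2 * m)
  set K := tailSeries 2 fun m => N (2 * m - 1)
  set G := tailSeries 2 fun m => Np (2 * m - 1)
  have hF : F = X + G + F ^ 2 := by
    simpa [sq] using tailSeries_one_eq_of_rec (a := fun k => Sp (2 * k))
      (c := fun k => Sp (2 * k)) (d := fun k => Np (2 * k - 1)) (r := 0) hSp2 fun m hm => by
        simpa only [zero_mul, zero_add, mul_tsub] using hSp m hm
  have hG : G = C (1 / 2) * (X * F) + F * G :=
    tailSeries_two_eq_of_rec (a := fun k => Sp (2 * k)) (b := fun k => Sp (2 * k))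
      (c := fun k => Np (2 * k - 1)) fun m hm => by
        simpa only [mul_tsub, mul_one] using hNp m hm
  have hU : U = X + X * U + K + F * U := by
    simpa using tailSeries_one_eq_of_rec (a := fun k => Sp (2 * k))
      (c := fun k => S (2 * k)) (d := fun k => N (2 * k - 1)) (r := 1) hS2 fun m hm => by
        simpa only [one_mul, mul_tsub, mul_one] using hS m hm
  have hK : K = C (1 / 2) * (X * U) + F * K :=
    tailSeries_two_eq_of_rec (a := fun k => Sp (2 * k)) (b := fun k => S (2 * k))
      (c := fun k => N (2 * k - 1)) fun m hm => by
        simpa only [mul_tsub, mul_one] using hN m hm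
  have hlag := lagrange_inversion
    (eq_X_mul_aeval_tetillaPoly (constantCoeff_tailSeries le_rfl _) hF hG hU hK) m 1 hm
  rw [pow_one, coeff_tailSeries, if_pos hm, tetillaPoly_pow_coeff_pred hm, Nat.cast_one, one_mul,
    one_div_pow] at hlag
  field_simp at hlag ⊢
  linear_combination hlag

/-- Proposition 2.8: the sequences defined by the recursion
`S⁺₂ = 1`, `N⁺₃ = 1/2`, and for `m ≥ 2`
`S⁺_{2m} = N⁺_{2m-1} + Σ_{k=1}^{m-1} S⁺_{2k} S⁺_{2m-2k}`,
`N⁺_{2m-1} = (1/2) S⁺_{2m-2} + Σ_{k=1}^{m-2} S⁺_{2k} N⁺_{2m-2k-1}`,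
together with `S₂ = 1`, `N₃ = 1/2`,
`S_{2m} = S_{2m-2} + N_{2m-1} + Σ_{k=1}^{m-1} S⁺_{2k} S_{2m-2k}`,
`N_{2m-1} = (1/2) S_{2m-2} + Σ_{k=1}^{m-2} S⁺_{2k} N_{2m-2k-1}`,
satisfy `S_{2m} = m_{2m}(𝒯) = (1/(2ᵐ m)) Σ_{k=1}^{m} 2ᵏ C(2m,k-1) C(m,k)` for all `m ≥ 1`. -/
theorem stmt18 (S Sp N Np : ℕ → ℝ)
    (hSp2 : Sp 2 = 1) (hNp3 : Np 3 = 1/2) (hS2 : S 2 = 1) (hN3 : N 3 = 1/2)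
    (hSp : ∀ m : ℕ, 2 ≤ m →
      Sp (2*m) = Np (2*m-1) + ∑ k ∈ Finset.Icc 1 (m-1), Sp (2*k) * Sp (2*m-2*k))
    (hNp : ∀ m : ℕ, 2 ≤ m →
      Np (2*m-1) = (1/2) * Sp (2*m-2) + ∑ k ∈ Finset.Icc 1 (m-2), Sp (2*k) * Np (2*m-2*k-1))
    (hS : ∀ m : ℕ, 2 ≤ m →
      S (2*m) = S (2*m-2) + N (2*m-1) + ∑ k ∈ Finset.Icc 1 (m-1), Sp (2*k) * S (2*m-2*k))
    (hN : ∀ m : ℕ, 2 ≤ m →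
      N (2*m-1) = (1/2) * S (2*m-2) + ∑ k ∈ Finset.Icc 1 (m-2), Sp (2*k) * N (2*m-2*k-1)) :
    ∀ m : ℕ, 1 ≤ m →
      S (2*m) = (1 / (2 ^ m * (m : ℝ))) *
        ∑ k ∈ Finset.Icc 1 m,
          (2 : ℝ) ^ k * (Nat.choose (2*m) (k-1)) * (Nat.choose m k) :=
  stmt18_general S Sp N Np hSp2 hS2 hSp hNp hS hN
end
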